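/- arXiv:2201.05783 — 5 statements merged into one kernel-verified Lean document; each statement's English description precedes it below -/
import Mathlib

section
/- For every graph G, the strict bramble number of G is at most the bramble number of G, and the bramble number of G is at most twice the strict bramble number of G. -/
open SimpleGraph

section Defs

variable {V W : Type}

/-- `X` covers the family `B`: every member of `B` meets `X`. -/
def Covers (X : Set V) (B : Set (Set V)) : Prop := ∀ S ∈ B, (S ∩ X).Nonempty

/-- A strict bramble: a family of connected vertex sets, pairwise intersecting. -/
def IsStrictBramble (G : SimpleGraph V) (B : Set (Set V)) : Prop :=
  (∀ S ∈ B, (G.induce S).Connected) ∧ ∀ S ∈ B, ∀ S' ∈ B, (S ∩ S').Nonempty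

/-- Two vertex sets touch: they intersect or are joined by an edge. -/
def Touches (G : SimpleGraph V) (S S' : Set V) : Prop :=
  (S ∩ S').Nonempty ∨ ∃ u ∈ S, ∃ v ∈ S', G.Adj u v

/-- A bramble: a family of connected vertex sets, pairwise touching. -/
def IsBramble (G : SimpleGraph V) (B : Set (Set V)) : Prop :=
  (∀ S ∈ B, (G.induce S).Connected) ∧ ∀ S ∈ B, ∀ S' ∈ B, Touches G S S'

/-- The order of a family of vertex sets: minimum size of a covering set. -/
noncomputable def brOrder (B : Set (Set V)) : ℕ :=
  sInf {n | ∃ X : Set V, Covers X B ∧ X.ncard = n}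

/-- The strict bramble number. -/
noncomputable def sbn (G : SimpleGraph V) : ℕ :=
  sSup {n | ∃ B, IsStrictBramble G B ∧ brOrder B = n}

/-- The bramble number. -/
noncomputable def bn (G : SimpleGraph V) : ℕ :=
  sSup {n | ∃ B, IsBramble G B ∧ brOrder B = n}

/-- `S` is an `(x,y)`-separator: `x, y ∉ S` and `x, y` lie in different
components of `G − S`. -/
def SepPair (G : SimpleGraph V) (x y : V) (S : Set V) : Prop :=
  x ∉ S ∧ y ∉ S ∧ ∀ (hx : x ∈ Sᶜ) (hy : y ∈ Sᶜ),
    ¬ (G.induce Sᶜ).Reachable ⟨x, hx⟩ ⟨y, hy⟩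

/-- `S` is an `(X,Y)`-separator of `G`. -/
def IsSetSeparator (G : SimpleGraph V) (X Y S : Set V) : Prop :=
  ∀ x ∈ X \ S, ∀ y ∈ Y \ S, SepPair G x y S

/-- A lenient tree decomposition of `G`. -/
structure LenientTD (G : SimpleGraph V) where
  ι : Type
  T : SimpleGraph ι
  tree : T.IsTree
  χ : ι → Set V
  covers : ∀ v : V, ∃ t, v ∈ χ t
  edge_mem : ∀ u v : V, G.Adj u v →
    ∃ t t', (t = t' ∨ T.Adj t t') ∧ u ∈ χ t ∪ χ t' ∧ v ∈ χ t ∪ χ t'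
  trace_conn : ∀ v : V, (T.induce {t | v ∈ χ t}).Connected

/-- The width of a lenient tree decomposition is at most `k`. -/
def LenientTD.WidthLE {G : SimpleGraph V} (D : LenientTD G) (k : ℕ) : Prop :=
  ∀ t, (D.χ t).ncard ≤ k

/-- An ordinary tree decomposition of `G`. -/
structure TreeDecomp (G : SimpleGraph V) where
  ι : Type
  T : SimpleGraph ι
  tree : T.IsTree
  χ : ι → Set V
  covers : ∀ v : V, ∃ t, v ∈ χ t
  edge_mem : ∀ u v : V, G.Adj u v → ∃ t, u ∈ χ t ∧ v ∈ χ t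
  trace_conn : ∀ v : V, (T.induce {t | v ∈ χ t}).Connected

/-- Treewidth: minimum over tree decompositions of (max bag size − 1). -/
noncomputable def tw (G : SimpleGraph V) : ℕ :=
  sInf {k | ∃ D : TreeDecomp G, ∀ t, (D.χ t).ncard ≤ k + 1}

/-- A minor model of `H` in `G`. -/
def IsMinorModel (H : SimpleGraph W) (G : SimpleGraph V) (μ : W → Set V) : Prop :=
  (∀ w, (G.induce (μ w)).Connected) ∧
  (∀ w w', w ≠ w' → μ w ∩ μ w' = ∅) ∧
  (∀ w w', H.Adj w w' → ∃ u ∈ μ w, ∃ v ∈ μ w', G.Adj u v)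

/-- `H` is a minor of `G`. -/
def IsMinorOf (H : SimpleGraph W) (G : SimpleGraph V) : Prop :=
  ∃ μ : W → Set V, IsMinorModel H G μ

/-- The lexicographic product `T · K_k`. -/
def lexK {ι : Type} (T : SimpleGraph ι) (k : ℕ) : SimpleGraph (ι × Fin k) where
  Adj a b := T.Adj a.1 b.1 ∨ (a.1 = b.1 ∧ a.2 ≠ b.2)
  symm := by
    constructor
    rintro a b (h | ⟨h1, h2⟩)
    · exact Or.inl h.symm
    · exact Or.inr ⟨h1.symm, h2.symm⟩
  loopless := by
    constructor
    rintro a (h | ⟨_, h2⟩)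
    · exact T.loopless.irrefl _ h
    · exact h2 rfl

/-- The lexicographic tree product number. -/
noncomputable def ltp (G : SimpleGraph V) : ℕ :=
  sInf {m | ∃ (ι : Type) (T : SimpleGraph ι), T.IsTree ∧ IsMinorOf G (lexK T m)}

/-- The `(T,χ)`-completion of `G`: make each union of two close bags a clique. -/
def LenientTD.completion {G : SimpleGraph V} (D : LenientTD G) : SimpleGraph V where
  Adj u v := u ≠ v ∧ ∃ t t', (t = t' ∨ D.T.Adj t t') ∧
    u ∈ D.χ t ∪ D.χ t' ∧ v ∈ D.χ t ∪ D.χ t'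
  symm := by
    constructor
    rintro u v ⟨hne, t, t', hc, hu, hv⟩
    exact ⟨hne.symm, t, t', hc, hv, hu⟩
  loopless := ⟨fun u h => h.1 rfl⟩

/-- `G` is chordal: every cycle of length at least four has a chord. -/
def IsChordal (G : SimpleGraph V) : Prop :=
  ∀ (v : V) (w : G.Walk v v), w.IsCycle → 4 ≤ w.length →
    ∃ x ∈ w.support, ∃ y ∈ w.support, G.Adj x y ∧ s(x, y) ∉ w.edges

end Defs

/-!
A strict bramble is a bramble, so `sbn G ≤ bn G`. Conversely, let `B` be a bramble of order `k`
and `t = ⌈k/2⌉`. For every `X` with `|X| < t` some member of `B` avoids `X`, and the members of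
`B` avoiding `X` pairwise touch, so their union `C(X)` is connected and disjoint from `X`. Two such
unions `C(X)`, `C(Y)` both contain a member of `B` avoiding `X ∪ Y`, which exists since
`|X ∪ Y| < k`; hence the sets `C(X)` form a strict bramble. A set `Y` with `|Y| < t` misses `C(Y)`,
so this strict bramble has order at least `t`.
-/

open Set

section Brambles

variable {V : Type} {G : SimpleGraph V} {B : Set (Set V)}

lemma Touches.induce_union_connected {S T : Set V} (hS : (G.induce S).Connected)
    (hT : (G.induce T).Connected) (h : Touches G S T) : (G.induce (S ∪ T)).Connected := by
  rcases h with hST | ⟨u, hu, v, hv, huv⟩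
  · exact SimpleGraph.induce_union_connected hS.preconnected hT.preconnected hST
  · exact connected_induce_union hS.preconnected hT.preconnected hu hv huv

lemma induce_sUnion_connected_of_pairwise_touches {𝒮 : Set (Set V)} (h𝒮 : 𝒮.Nonempty)
    (hconn : ∀ S ∈ 𝒮, (G.induce S).Connected) (htouch : ∀ S ∈ 𝒮, ∀ T ∈ 𝒮, Touches G S T) :
    (G.induce (⋃₀ 𝒮)).Connected := by
  obtain ⟨S, hS⟩ := h𝒮
  obtain ⟨⟨v, hv⟩⟩ := (hconn S hS).nonempty
  refine G.induce_connected_of_patches v (subset_sUnion_of_mem hS hv) fun hw => ?_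
  obtain ⟨T, hT, hwT⟩ := mem_sUnion.mp hw
  exact ⟨S ∪ T, union_subset (subset_sUnion_of_mem hS) (subset_sUnion_of_mem hT), .inl hv,
    .inr hwT, (htouch S hS T hT).induce_union_connected (hconn S hS) (hconn T hT) _ _⟩

lemma covers_univ (hB : ∀ S ∈ B, S.Nonempty) : Covers univ B := fun S hS => by
  simpa using hB S hS

lemma brOrder_le_ncard {X : Set V} (h : Covers X B) : brOrder B ≤ X.ncard :=
  Nat.sInf_le ⟨X, h, rfl⟩

lemma brOrder_empty : brOrder (∅ : Set (Set V)) = 0 :=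
  Nat.sInf_eq_zero.mpr (.inl ⟨∅, fun _ h => h.elim, ncard_empty V⟩)

-- `hB` provides a cover: without one, `brOrder B = sInf ∅ = 0`.
lemma le_brOrder {n : ℕ} (hB : ∀ S ∈ B, S.Nonempty) (h : ∀ X, Covers X B → n ≤ X.ncard) :
    n ≤ brOrder B :=
  le_csInf ⟨_, univ, covers_univ hB, rfl⟩ (by rintro _ ⟨X, hX, rfl⟩; exact h X hX)

lemma brOrder_le_card [Finite V] (hB : ∀ S ∈ B, S.Nonempty) : brOrder B ≤ Nat.card V := by
  simpa using brOrder_le_ncard (covers_univ hB)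

lemma exists_disjoint_of_ncard_lt_brOrder {X : Set V} (h : X.ncard < brOrder B) :
    ∃ S ∈ B, Disjoint S X := by
  by_contra! hB
  exact (brOrder_le_ncard fun S hS => not_disjoint_iff_nonempty_inter.mp (hB S hS)).not_gt h

lemma isStrictBramble_empty : IsStrictBramble G ∅ :=
  ⟨fun _ h => h.elim, fun _ h => h.elim⟩

lemma IsStrictBramble.isBramble (h : IsStrictBramble G B) : IsBramble G B :=
  ⟨h.1, fun S hS T hT => .inl (h.2 S hS T hT)⟩

lemma IsBramble.nonempty_of_mem (h : IsBramble G B) {S : Set V} (hS : S ∈ B) : S.Nonempty :=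
  nonempty_coe_sort.mp (h.1 S hS).nonempty

lemma bddAbove_bramble_orders [Finite V] :
    BddAbove {n | ∃ B, IsBramble G B ∧ brOrder B = n} :=
  ⟨Nat.card V, by rintro _ ⟨B, hB, rfl⟩; exact brOrder_le_card fun _ => hB.nonempty_of_mem⟩

lemma strictBramble_orders_subset :
    {n | ∃ B, IsStrictBramble G B ∧ brOrder B = n} ⊆ {n | ∃ B, IsBramble G B ∧ brOrder B = n} := by
  rintro _ ⟨B, hB, rfl⟩
  exact ⟨B, hB.isBramble, rfl⟩

def unionAvoiding (B : Set (Set V)) (X : Set V) : Set V := ⋃₀ {S ∈ B | Disjoint S X}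

lemma subset_unionAvoiding {S X : Set V} (hS : S ∈ B) (hSX : Disjoint S X) :
    S ⊆ unionAvoiding B X :=
  subset_sUnion_of_mem ⟨hS, hSX⟩

lemma disjoint_unionAvoiding (X : Set V) : Disjoint (unionAvoiding B X) X :=
  disjoint_sUnion_left.mpr fun _ hS => hS.2

lemma IsBramble.unionAvoiding_connected (hB : IsBramble G B) {X : Set V}
    (hX : X.ncard < brOrder B) : (G.induce (unionAvoiding B X)).Connected :=
  induce_sUnion_connected_of_pairwise_touches (exists_disjoint_of_ncard_lt_brOrder hX)
    (fun S hS => hB.1 S hS.1) fun S hS T hT => hB.2 S hS.1 T hT.1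

lemma IsBramble.exists_isStrictBramble_half_le (hB : IsBramble G B) :
    ∃ B', IsStrictBramble G B' ∧ (brOrder B + 1) / 2 ≤ brOrder B' := by
  set t := (brOrder B + 1) / 2
  have ht : t ≤ brOrder B := by omega
  refine ⟨unionAvoiding B '' {X | X.ncard < t}, ⟨?_, ?_⟩, ?_⟩
  · rintro _ ⟨X, hX : X.ncard < t, rfl⟩
    exact hB.unionAvoiding_connected (hX.trans_le ht)
  · rintro _ ⟨X, hX : X.ncard < t, rfl⟩ _ ⟨Y, hY : Y.ncard < t, rfl⟩
    have hXY : (X ∪ Y).ncard < brOrder B := (ncard_union_le X Y).trans_lt (by omega)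
    obtain ⟨S, hS, hSXY⟩ := exists_disjoint_of_ncard_lt_brOrder hXY
    obtain ⟨v, hv⟩ := hB.nonempty_of_mem hS
    rw [disjoint_union_right] at hSXY
    exact ⟨v, subset_unionAvoiding hS hSXY.1 hv, subset_unionAvoiding hS hSXY.2 hv⟩
  · refine le_brOrder ?_ fun Y hY => ?_
    · rintro _ ⟨X, hX : X.ncard < t, rfl⟩
      obtain ⟨S, hS, hSX⟩ := exists_disjoint_of_ncard_lt_brOrder (hX.trans_le ht)
      exact (hB.nonempty_of_mem hS).mono (subset_unionAvoiding hS hSX)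
    · by_contra! hYt
      exact not_nonempty_iff_eq_empty.mpr (disjoint_unionAvoiding Y).inter_eq
        (hY _ ⟨Y, hYt, rfl⟩)

theorem sbn_le_bn [Finite V] (G : SimpleGraph V) : sbn G ≤ bn G :=
  csSup_le_csSup bddAbove_bramble_orders ⟨0, ∅, isStrictBramble_empty, brOrder_empty⟩
    strictBramble_orders_subset

theorem bn_le_two_mul_sbn [Finite V] (G : SimpleGraph V) : bn G ≤ 2 * sbn G := by
  refine csSup_le ⟨0, ∅, isStrictBramble_empty.isBramble, brOrder_empty⟩ ?_
  rintro _ ⟨B, hB, rfl⟩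
  obtain ⟨B', hB', hle⟩ := hB.exists_isStrictBramble_half_le
  have : brOrder B' ≤ sbn G :=
    le_csSup (bddAbove_bramble_orders.mono strictBramble_orders_subset) ⟨B', hB', rfl⟩
  omega

end Brambles

/-- For every graph `G`, `sbn G ≤ bn G ≤ 2 · sbn G`. -/
theorem sbn_le_bn_le_two_mul_sbn {V : Type} [Fintype V] (G : SimpleGraph V) :
    sbn G ≤ bn G ∧ bn G ≤ 2 * sbn G :=
  ⟨sbn_le_bn G, bn_le_two_mul_sbn G⟩
end

section
/- Let G be a graph, B a strict bramble of G, X and Y vertex sets that each cover B, and S an (X,Y)-separator of G. Then S covers B. -/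
open SimpleGraph

theorem IsSetSeparator.inter_nonempty_of_preconnected {V : Type} {G : SimpleGraph V}
    {X Y S C : Set V} (hS : IsSetSeparator G X Y S) (hC : (G.induce C).Preconnected)
    (hCX : (C ∩ X).Nonempty) (hCY : (C ∩ Y).Nonempty) : (C ∩ S).Nonempty := by
  by_contra hCS
  have hCSc : C ⊆ Sᶜ := fun v hvC hvS => hCS ⟨v, hvC, hvS⟩
  obtain ⟨x, hxC, hxX⟩ := hCX
  obtain ⟨y, hyC, hyY⟩ := hCY
  have hxy : (G.induce C).Reachable ⟨x, hxC⟩ ⟨y, hyC⟩ := hC _ _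
  exact (hS x ⟨hxX, hCSc hxC⟩ y ⟨hyY, hCSc hyC⟩).2.2 (hCSc hxC) (hCSc hyC)
    (hxy.map (G.induceHomOfLE hCSc).toHom)

theorem separator_covers_general {V : Type} (G : SimpleGraph V)
    (B : Set (Set V)) (hB : IsStrictBramble G B) (X Y S : Set V)
    (hX : Covers X B) (hY : Covers Y B) (hS : IsSetSeparator G X Y S) :
    Covers S B :=
  fun C hC => hS.inter_nonempty_of_preconnected (hB.1 C hC).preconnected (hX C hC) (hY C hC)

/-- an `(X,Y)`-separator covers any strict bramble covered by both
`X` and `Y`. -/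
theorem separator_covers {V : Type} [Fintype V] (G : SimpleGraph V)
    (B : Set (Set V)) (hB : IsStrictBramble G B) (X Y S : Set V)
    (hX : Covers X B) (hY : Covers Y B) (hS : IsSetSeparator G X Y S) :
    Covers S B :=
  separator_covers_general G B hB X Y S hX hY hS
end

section
/- Let (T,χ) be a lenient tree decomposition of a graph G, and let t be a node of T such that there exist distinct vertices x, y of G whose traces Trace(x) = {s : x ∈ χ(s)} and Trace(y) lie in different components of T − t. Then χ(t) is an (x,y)-separator of G. -/
open SimpleGraph

/-!
Deleting `t` from `T` leaves every trace of a vertex outside `χ t` inside a single component of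
`T − t`, because traces are connected. An edge of `G − χ t` lies in the union of two close bags,
neither of which is `χ t`, so the traces of its ends fall into the same component. Following a path
of `G − χ t` from `x` to `y` would therefore join the traces of `x` and `y` in `T − t`.
-/

lemma SimpleGraph.eq_or_adj_of_mem_pair {α : Type} {T : SimpleGraph α} {a b c d : α}
    (hab : a = b ∨ T.Adj a b) (hc : c = a ∨ c = b) (hd : d = a ∨ d = b) :
    c = d ∨ T.Adj c d := by
  rcases hc with rfl | rfl <;> rcases hd with rfl | rfl
  exacts [Or.inl rfl, hab, hab.imp Eq.symm Adj.symm, Or.inl rfl]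

namespace LenientTD

variable {V : Type} {G : SimpleGraph V} (D : LenientTD G) (t : D.ι)

lemma ne_of_mem_bag {u : V} (hut : u ∉ D.χ t) {s : D.ι} (hs : u ∈ D.χ s) : s ≠ t :=
  fun h => hut (h ▸ hs)

lemma reachable_of_mem_trace {u : V} (hut : u ∉ D.χ t) {s s' : D.ι}
    (hs : u ∈ D.χ s) (hs' : u ∈ D.χ s') :
    (D.T.induce {t}ᶜ).Reachable ⟨s, D.ne_of_mem_bag t hut hs⟩
      ⟨s', D.ne_of_mem_bag t hut hs'⟩ := by
  let F : D.T.induce {a | u ∈ D.χ a} →g D.T.induce {t}ᶜ :=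
    { toFun := fun a => ⟨a, D.ne_of_mem_bag t hut a.2⟩
      map_rel' := id }
  exact (D.trace_conn u ⟨s, hs⟩ ⟨s', hs'⟩).map F

noncomputable def traceNode (u : ((D.χ t)ᶜ : Set V)) : ({t}ᶜ : Set D.ι) :=
  ⟨(D.covers u).choose, D.ne_of_mem_bag t u.2 (D.covers u).choose_spec⟩

lemma mem_traceNode (u : ((D.χ t)ᶜ : Set V)) : u.1 ∈ D.χ (D.traceNode t u) :=
  (D.covers u).choose_spec

lemma reachable_traceNode_of_adj {u v : ((D.χ t)ᶜ : Set V)} (huv : (G.induce (D.χ t)ᶜ).Adj u v) :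
    (D.T.induce {t}ᶜ).Reachable (D.traceNode t u) (D.traceNode t v) := by
  obtain ⟨t₁, t₂, hclose, hu, hv⟩ := D.edge_mem u v huv
  obtain ⟨a, ha, hua⟩ : ∃ a, (a = t₁ ∨ a = t₂) ∧ u.1 ∈ D.χ a := by
    rcases hu with hu | hu <;> exact ⟨_, by simp, hu⟩
  obtain ⟨b, hb, hvb⟩ : ∃ b, (b = t₁ ∨ b = t₂) ∧ v.1 ∈ D.χ b := by
    rcases hv with hv | hv <;> exact ⟨_, by simp, hv⟩
  have hab : (D.T.induce {t}ᶜ).Reachable ⟨a, D.ne_of_mem_bag t u.2 hua⟩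
      ⟨b, D.ne_of_mem_bag t v.2 hvb⟩ := by
    rcases eq_or_adj_of_mem_pair hclose ha hb with rfl | h
    · rfl
    · exact Adj.reachable h
  exact (D.reachable_of_mem_trace t u.2 (D.mem_traceNode t u) hua).trans
    (hab.trans (D.reachable_of_mem_trace t v.2 hvb (D.mem_traceNode t v)))

lemma reachable_traceNode_of_reachable {u v : ((D.χ t)ᶜ : Set V)}
    (huv : (G.induce (D.χ t)ᶜ).Reachable u v) :
    (D.T.induce {t}ᶜ).Reachable (D.traceNode t u) (D.traceNode t v) := by
  rw [reachable_iff_reflTransGen] at huv ⊢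
  exact huv.lift' _ fun _ _ h => (reachable_iff_reflTransGen _ _).1
    (D.reachable_traceNode_of_adj t h)

end LenientTD

theorem bag_is_separator_general {V : Type} (G : SimpleGraph V)
    (D : LenientTD G) (t : D.ι) (x y : V)
    (hxt : x ∉ D.χ t) (hyt : y ∉ D.χ t)
    (hsep : ∀ (s s' : D.ι) (hs : s ∈ ({t}ᶜ : Set D.ι)) (hs' : s' ∈ ({t}ᶜ : Set D.ι)),
      x ∈ D.χ s → y ∈ D.χ s' →
      ¬ (D.T.induce ({t}ᶜ : Set D.ι)).Reachable ⟨s, hs⟩ ⟨s', hs'⟩) :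
    SepPair G x y (D.χ t) :=
  ⟨hxt, hyt, fun hx hy hreach => hsep _ _ _ _ (D.mem_traceNode t ⟨x, hx⟩)
    (D.mem_traceNode t ⟨y, hy⟩) (D.reachable_traceNode_of_reachable t hreach)⟩

/-- if the traces of distinct vertices `x`, `y` lie in different
components of `T − t`, then `χ t` is an `(x,y)`-separator of `G`. -/
theorem bag_is_separator {V : Type} [Fintype V] (G : SimpleGraph V)
    (D : LenientTD G) (t : D.ι) (x y : V) (hxy : x ≠ y)
    (hxt : x ∉ D.χ t) (hyt : y ∉ D.χ t)
    (hsep : ∀ (s s' : D.ι) (hs : s ∈ ({t}ᶜ : Set D.ι)) (hs' : s' ∈ ({t}ᶜ : Set D.ι)),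
      x ∈ D.χ s → y ∈ D.χ s' →
      ¬ (D.T.induce ({t}ᶜ : Set D.ι)).Reachable ⟨s, hs⟩ ⟨s', hs'⟩) :
    SepPair G x y (D.χ t) :=
  bag_is_separator_general G D t x y hxt hyt hsep
end

section
/- Let G and G′ be disjoint graphs each having a lenient tree decomposition of width at most k, and let G″ be obtained from their disjoint union by identifying a vertex x of G with a vertex y of G′. Then G″ has a lenient tree decomposition of width at most k. -/
/-! Join the two decomposition trees by a new edge between a node whose bag contains `x` and a
node whose bag contains `y`, and map the bags of both decompositions into the glued graph. The
identified vertex is the only vertex lying in bags of both trees, and its two traces are linked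
by the new edge, so all traces stay connected; bag sizes are unchanged because both vertex maps
are injective. -/

open SimpleGraph

/-- The graph obtained from the disjoint union of `G` and `G'` by identifying
the vertex `x` of `G` with the vertex `y` of `G'`. -/
def glue {V V' : Type} (G : SimpleGraph V) (G' : SimpleGraph V') (x : V)
    (y : V') : SimpleGraph (V ⊕ {v : V' // v ≠ y}) :=
  SimpleGraph.fromRel (fun a b =>
    match a, b with
    | Sum.inl u, Sum.inl v => G.Adj u v
    | Sum.inr u, Sum.inr v => G'.Adj u.1 v.1
    | Sum.inl u, Sum.inr v => u = x ∧ G'.Adj y v.1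
    | Sum.inr _, Sum.inl _ => False)

namespace SimpleGraph

variable {V W : Type*} {G : SimpleGraph V} {H : SimpleGraph W}

lemma fromRel_le_of {r : V → V → Prop}
    (h : ∀ a b, r a b → G.Adj a b) : fromRel r ≤ G :=
  fun a b ⟨_, hab⟩ => hab.elim (h a b) fun hba => (h b a hba).symm

lemma Walk.IsCycle.induce {s : Set V} {u : V} {c : G.Walk u u} (hc : c.IsCycle)
    (hs : ∀ x ∈ c.support, x ∈ s) : (c.induce s hs).IsCycle :=
  (Walk.isCycle_map_iff_of_injective (Embedding.induce (G := G) s).injective).mp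
    (by rwa [Walk.map_induce])

lemma not_isCycle_sum_inl (hG : G.IsAcyclic) {a : V} (c : (G ⊕g H).Walk (.inl a) (.inl a)) :
    ¬ c.IsCycle := by
  classical
  intro hc
  have hs : ∀ z ∈ c.support, z ∈ Set.range Sum.inl := by
    rintro (z | z) hz
    · exact ⟨z, rfl⟩
    · exact absurd (c.takeUntil _ hz).reachable (not_reachable_sum_inl_inr a z)
  exact (Embedding.sumInl (G := G) (H := H)).isoInduceRange.isAcyclic_iff.mp hG _
    (hc.induce hs)

lemma IsAcyclic.sum (hG : G.IsAcyclic) (hH : H.IsAcyclic) : (G ⊕g H).IsAcyclic := by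
  rintro (a | b) c hc
  · exact not_isCycle_sum_inl hG c hc
  · exact not_isCycle_sum_inl hH (c.map Iso.sumComm.toHom)
      ((Walk.isCycle_map_iff_of_injective Iso.sumComm.injective).mpr hc)

lemma IsTree.sum_sup_edge (hG : G.IsTree) (hH : H.IsTree) (v : V) (w : W) :
    ((G ⊕g H) ⊔ edge (Sum.inl v) (Sum.inr w)).IsTree :=
  ⟨hG.connected.sum_sup_edge hH.connected,
    (hG.isAcyclic.sum hH.isAcyclic).sup_edge_of_not_reachable (not_reachable_sum_inl_inr v w)⟩

lemma Connected.induce_image (f : G →g H) {s : Set V} (hs : (G.induce s).Connected) :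
    (H.induce (f '' s)).Connected :=
  hs.map (induceHom f (Set.mapsTo_image f s)) (by
    rintro ⟨_, u, hu, rfl⟩
    exact ⟨⟨u, hu⟩, rfl⟩)

lemma connected_induce_image_sum_sup_edge {v : V} {w : W} {s : Set V} {t : Set W}
    (hs : (G.induce s).Connected) (ht : (H.induce t).Connected) (hv : v ∈ s) (hw : w ∈ t) :
    (((G ⊕g H) ⊔ edge (Sum.inl v) (Sum.inr w)).induce (Sum.inl '' s ∪ Sum.inr '' t)).Connected :=
  connected_induce_union
    (hs.induce_image ((Hom.ofLE le_sup_left).comp Embedding.sumInl.toHom)).preconnected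
    (ht.induce_image ((Hom.ofLE le_sup_left).comp Embedding.sumInr.toHom)).preconnected
    (Set.mem_image_of_mem _ hv) (Set.mem_image_of_mem _ hw) (by simp [edge_adj])

end SimpleGraph

namespace LenientTD

open Sum

variable {V V' W : Type} {G : SimpleGraph V} {G' : SimpleGraph V'} {H : SimpleGraph W}

lemma exists_close_of_adj_of_hom (D : LenientTD G) {κ : Type} {T : SimpleGraph κ}
    (φ : D.T →g T) (f : V → W) {χ : κ → Set W} (hχ : ∀ t, χ (φ t) = f '' D.χ t) {u v : V}
    (huv : G.Adj u v) :
    ∃ s s', (s = s' ∨ T.Adj s s') ∧ f u ∈ χ s ∪ χ s' ∧ f v ∈ χ s ∪ χ s' := by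
  obtain ⟨t, t', htt', hu, hv⟩ := D.edge_mem u v huv
  have hmem : ∀ z ∈ D.χ t ∪ D.χ t', f z ∈ χ (φ t) ∪ χ (φ t') := fun z hz => by
    rw [hχ, hχ, ← Set.image_union]
    exact Set.mem_image_of_mem f hz
  refine ⟨φ t, φ t', ?_, hmem u hu, hmem v hv⟩
  rcases htt' with rfl | h
  · exact Or.inl rfl
  · exact Or.inr (φ.map_adj h)

lemma setOf_apply_mem_image (D : LenientTD G) (f : V ↪ W) (u : V) :
    {t | f u ∈ f '' D.χ t} = {t | u ∈ D.χ t} := by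
  simp only [f.injective.mem_set_image]

lemma setOf_mem_image_of_notMem_range (D : LenientTD G) {f : V → W} {w : W}
    (hw : w ∉ Set.range f) : {t | w ∈ f '' D.χ t} = ∅ :=
  Set.eq_empty_of_forall_notMem fun _ ⟨u, _, hu⟩ => hw ⟨u, hu⟩

variable (D : LenientTD G) (D' : LenientTD G') (f : V ↪ W) (f' : V' ↪ W) (t₀ : D.ι) (t₀' : D'.ι)

def joinTree : SimpleGraph (D.ι ⊕ D'.ι) := (D.T ⊕g D'.T) ⊔ edge (inl t₀) (inr t₀')

def joinBags : D.ι ⊕ D'.ι → Set W := Sum.elim (fun t => f '' D.χ t) (fun t => f' '' D'.χ t)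

lemma connected_induce_joinTree_setOf_mem_joinBags
    (hshared : ∀ u u', f u = f' u' → u ∈ D.χ t₀ ∧ u' ∈ D'.χ t₀') (w : W)
    (hw : w ∈ Set.range f ∨ w ∈ Set.range f') :
    ((D.joinTree D' t₀ t₀').induce {t | w ∈ D.joinBags D' f f' t}).Connected := by
  rw [← Set.image_preimage_inl_union_image_preimage_inr {t | w ∈ D.joinBags D' f f' t}]
  change ((D.joinTree D' t₀ t₀').induce
    (inl '' {t | w ∈ f '' D.χ t} ∪ inr '' {t | w ∈ f' '' D'.χ t})).Connected
  by_cases hf : w ∈ Set.range f <;> by_cases hf' : w ∈ Set.range f'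
  · obtain ⟨u, rfl⟩ := hf
    obtain ⟨u', hu'⟩ := hf'
    obtain ⟨h₀, h₀'⟩ := hshared u u' hu'.symm
    rw [setOf_apply_mem_image, ← hu', setOf_apply_mem_image]
    exact connected_induce_image_sum_sup_edge (D.trace_conn u) (D'.trace_conn u') h₀ h₀'
  · obtain ⟨u, rfl⟩ := hf
    rw [setOf_mem_image_of_notMem_range D' hf', Set.image_empty, Set.union_empty,
      setOf_apply_mem_image]
    exact (D.trace_conn u).induce_image ((Hom.ofLE le_sup_left).comp Embedding.sumInl.toHom)
  · obtain ⟨u', rfl⟩ := hf'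
    rw [setOf_mem_image_of_notMem_range D hf, Set.image_empty, Set.empty_union,
      setOf_apply_mem_image]
    exact (D'.trace_conn u').induce_image ((Hom.ofLE le_sup_left).comp Embedding.sumInr.toHom)
  · exact (hw.elim hf hf').elim

def join (hcover : ∀ w, w ∈ Set.range f ∨ w ∈ Set.range f') (hle : H ≤ G.map f ⊔ G'.map f')
    (hshared : ∀ u u', f u = f' u' → u ∈ D.χ t₀ ∧ u' ∈ D'.χ t₀') : LenientTD H where
  ι := D.ι ⊕ D'.ι
  T := D.joinTree D' t₀ t₀'
  tree := D.tree.sum_sup_edge D'.tree t₀ t₀'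
  χ := D.joinBags D' f f'
  covers w := by
    rcases hcover w with ⟨u, rfl⟩ | ⟨u, rfl⟩
    · obtain ⟨t, ht⟩ := D.covers u
      exact ⟨inl t, Set.mem_image_of_mem f ht⟩
    · obtain ⟨t, ht⟩ := D'.covers u
      exact ⟨inr t, Set.mem_image_of_mem f' ht⟩
  edge_mem a b hab := by
    obtain ⟨u, v, huv, rfl, rfl⟩ | ⟨u, v, huv, rfl, rfl⟩ := by
      simpa only [sup_adj, map_adj] using hle hab
    · exact D.exists_close_of_adj_of_hom ((Hom.ofLE le_sup_left).comp Embedding.sumInl.toHom)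
        f (fun _ => rfl) huv
    · exact D'.exists_close_of_adj_of_hom ((Hom.ofLE le_sup_left).comp Embedding.sumInr.toHom)
        f' (fun _ => rfl) huv
  trace_conn w := D.connected_induce_joinTree_setOf_mem_joinBags D' f f' t₀ t₀' hshared w
    (hcover w)

lemma widthLE_join {k : ℕ} (hD : D.WidthLE k) (hD' : D'.WidthLE k)
    (hcover : ∀ w, w ∈ Set.range f ∨ w ∈ Set.range f') (hle : H ≤ G.map f ⊔ G'.map f')
    (hshared : ∀ u u', f u = f' u' → u ∈ D.χ t₀ ∧ u' ∈ D'.χ t₀') :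
    (D.join D' f f' t₀ t₀' hcover hle hshared).WidthLE k := by
  rintro (t | t)
  · exact (Set.ncard_image_of_injective _ f.injective).trans_le (hD t)
  · exact (Set.ncard_image_of_injective _ f'.injective).trans_le (hD' t)

end LenientTD

section Glue

open Sum

variable {V V' : Type} [DecidableEq V'] (x : V) (y : V')

def glueInr : V' ↪ V ⊕ {v : V' // v ≠ y} where
  toFun v := if h : v = y then inl x else inr ⟨v, h⟩
  inj' u v huv := by
    by_cases hu : u = y <;> by_cases hv : v = y <;> simp_all [eq_comm]

lemma glueInr_self : glueInr x y y = inl x := dif_pos rfl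

lemma glueInr_val (v : {v : V' // v ≠ y}) : glueInr x y v = inr v := dif_neg v.2

lemma inl_eq_glueInr_iff {u : V} {v : V'} : inl u = glueInr x y v ↔ u = x ∧ v = y := by
  by_cases hv : v = y
  · simp [hv, glueInr_self]
  · simp [hv, glueInr_val x y ⟨v, hv⟩]

lemma mem_range_inl_or_mem_range_glueInr (w : V ⊕ {v : V' // v ≠ y}) :
    w ∈ Set.range inl ∨ w ∈ Set.range (glueInr x y) := by
  rcases w with u | v
  · exact Or.inl ⟨u, rfl⟩
  · exact Or.inr ⟨v, glueInr_val x y v⟩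

lemma glue_le_map_sup_map (G : SimpleGraph V) (G' : SimpleGraph V') :
    glue G G' x y ≤ G.map Function.Embedding.inl ⊔ G'.map (glueInr x y) := by
  refine fromRel_le_of fun a b hab => ?_
  rcases a with u | u <;> rcases b with v | v
  · exact Or.inl (map_adj_apply.mpr hab)
  · obtain ⟨rfl, hyv⟩ := hab
    rw [← glueInr_self u y, ← glueInr_val u y v]
    exact Or.inr (map_adj_apply.mpr hyv)
  · exact hab.elim
  · rw [← glueInr_val x y u, ← glueInr_val x y v]
    exact Or.inr (map_adj_apply.mpr hab)

end Glue

theorem glue_lenientTD_general {V V' : Type}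
    (G : SimpleGraph V) (G' : SimpleGraph V') (x : V) (y : V') (k : ℕ)
    (hG : ∃ D : LenientTD G, D.WidthLE k)
    (hG' : ∃ D : LenientTD G', D.WidthLE k) :
    ∃ D : LenientTD (glue G G' x y), D.WidthLE k := by
  classical
  obtain ⟨D, hD⟩ := hG
  obtain ⟨D', hD'⟩ := hG'
  obtain ⟨t₀, hx⟩ := D.covers x
  obtain ⟨t₀', hy⟩ := D'.covers y
  have hshared : ∀ u v, Function.Embedding.inl u = glueInr x y v → u ∈ D.χ t₀ ∧ v ∈ D'.χ t₀' :=
    fun u v huv => by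
      obtain ⟨rfl, rfl⟩ := (inl_eq_glueInr_iff x y).mp huv
      exact ⟨hx, hy⟩
  exact ⟨_, D.widthLE_join D' _ _ t₀ t₀' hD hD' (mem_range_inl_or_mem_range_glueInr x y)
    (glue_le_map_sup_map x y G G') hshared⟩

/-- identifying one vertex of `G` with one vertex of `G'`
preserves having a lenient tree decomposition of width at most `k`. -/
theorem glue_lenientTD {V V' : Type} [Fintype V] [Fintype V']
    (G : SimpleGraph V) (G' : SimpleGraph V') (x : V) (y : V') (k : ℕ)
    (hG : ∃ D : LenientTD G, D.WidthLE k)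
    (hG' : ∃ D : LenientTD G', D.WidthLE k) :
    ∃ D : LenientTD (glue G G' x y), D.WidthLE k :=
  glue_lenientTD_general G G' x y k hG hG'
end

section
/- Let G be a graph with a lenient tree decomposition of width at most k in which all bags have size exactly k and no two bags are comparable under inclusion (an 'extreme' decomposition (T,χ)), and let G⁺ be the (T,χ)-completion of G. Then for every pair of nodes t, t′ of T there exist k pairwise vertex-disjoint χ(t)–χ(t′) paths in G⁺. -/
open SimpleGraph

/-! Walk along the tree path from `t` to `t'`, starting with `k` trivial paths in `χ(t')`, and
move their starting points bag by bag. Passing from a node `s'` to its predecessor `s`, a path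
starting in `χ(s') \ χ(s)` is extended by one edge of the clique `χ(s) ∪ χ(s')` to a vertex of
`χ(s) \ χ(s')`; equal bag sizes let these new starting points be chosen distinct. By (C3) a
vertex of `χ(s) \ χ(s')` lies in no bag further along the tree path, so it is not yet used by
any of the paths. -/

namespace Set

theorem exists_injOn_fixing_inter_mapsTo_sdiff {α : Type*} {A B : Set α} (hA : A.Finite)
    (hB : B.Finite) (hcard : A.ncard = B.ncard) :
    ∃ g : α → α, InjOn g A ∧ (∀ x ∈ A ∩ B, g x = x) ∧ MapsTo g (A \ B) (B \ A) := by
  classical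
  have : Finite ↥(A \ B) := hA.sdiff.to_subtype
  have : Finite ↥(B \ A) := hB.sdiff.to_subtype
  obtain ⟨e⟩ : Nonempty (↥(A \ B) ≃ ↥(B \ A)) := by
    rw [← Finite.card_eq, Nat.card_coe_set_eq, Nat.card_coe_set_eq,
      ← ncard_eq_ncard_iff_ncard_sdiff_eq_ncard_sdiff hA hB]
    exact hcard
  refine ⟨fun x => if h : x ∈ A \ B then e ⟨x, h⟩ else x, ?_, ?_, ?_⟩
  · intro x hx y hy hxy
    by_cases hx' : x ∈ A \ B <;> by_cases hy' : y ∈ A \ B <;>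
      simp only [hx', hy', dite_true, dite_false] at hxy
    · exact congrArg Subtype.val (e.injective (Subtype.ext hxy))
    · exact absurd (hxy ▸ hy) (e ⟨x, hx'⟩).2.2
    · exact absurd (hxy ▸ hx) (e ⟨y, hy'⟩).2.2
    · exact hxy
  · intro x hx
    simp [hx.2]
  · intro x hx
    simp [hx]

end Set

namespace SimpleGraph

variable {V ι : Type*}

theorem IsAcyclic.support_subset_of_preconnected {T : SimpleGraph ι} (hT : T.IsAcyclic)
    {S : Set ι} (hS : (T.induce S).Preconnected) {x y : ι} (hx : x ∈ S) (hy : y ∈ S)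
    {w : T.Walk x y} (hw : w.IsPath) : ∀ u ∈ w.support, u ∈ S := by
  classical
  obtain ⟨q⟩ := hS ⟨x, hx⟩ ⟨y, hy⟩
  let q' := (q.map (Embedding.induce S).toHom).bypass
  have hwq : w = q' :=
    congrArg Subtype.val ((hT.subsingleton_path x y).elim ⟨w, hw⟩ ⟨q', Walk.bypass_isPath _⟩)
  intro u hu
  rw [hwq] at hu
  obtain ⟨⟨v, hv⟩, -, rfl⟩ :=
    List.mem_map.1 (Walk.support_map _ _ ▸ Walk.support_bypass_subset_support _ hu)
  exact hv

def HasDisjointPathsIn (H : SimpleGraph V) (ι : Type*) (X Y U : Set V) : Prop :=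
  ∃ (a b : ι → V) (p : ∀ i, H.Walk (a i) (b i)),
    (∀ i, (p i).IsPath) ∧ (∀ i, a i ∈ X) ∧ (∀ i, b i ∈ Y) ∧
    (∀ i j, i ≠ j → ∀ v, v ∈ (p i).support → v ∉ (p j).support) ∧
    ∀ i, ∀ v ∈ (p i).support, v ∈ U

variable {H : SimpleGraph V}

theorem hasDisjointPathsIn_of_embedding {X : Set V} (f : ι ↪ X) :
    H.HasDisjointPathsIn ι X X X := by
  refine ⟨fun i => f i, fun i => f i, fun _ => .nil, fun _ => .nil, fun i => (f i).2,
    fun i => (f i).2, ?_, ?_⟩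
  · intro i j hij v hvi hvj
    simp only [Walk.support_nil, List.mem_singleton] at hvi hvj
    exact hij (f.injective (Subtype.ext (hvi.symm.trans hvj)))
  · intro i v hv
    simp only [Walk.support_nil, List.mem_singleton] at hv
    exact hv ▸ (f i).2

theorem HasDisjointPathsIn.shift_start {X X' Y U : Set V} (h : H.HasDisjointPathsIn ι X Y U)
    (hX : X.Finite) (hX' : X'.Finite) (hcard : X.ncard = X'.ncard)
    (hadj : ∀ x ∈ X \ X', ∀ x' ∈ X' \ X, H.Adj x' x) (hU : Disjoint U (X' \ X)) :
    H.HasDisjointPathsIn ι X' Y (X' ∪ U) := by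
  obtain ⟨a, b, p, hp, ha, hb, hdisj, hpU⟩ := h
  obtain ⟨g, hinj, hfix, hmaps⟩ := Set.exists_injOn_fixing_inter_mapsTo_sdiff hX hX' hcard
  have hg_new : ∀ i j, a i ∉ X' → g (a i) ∉ (p j).support := fun i j hi hmem =>
    Set.disjoint_left.1 hU (hpU j _ hmem) (hmaps ⟨ha i, hi⟩)
  have hg_mem : ∀ i, g (a i) ∈ X' := fun i => by
    by_cases hi : a i ∈ X'
    · rwa [hfix _ ⟨ha i, hi⟩]
    · exact (hmaps ⟨ha i, hi⟩).1
  have hg_mem_support : ∀ i j, g (a i) ∈ (p j).support → i = j := fun i j hmem => by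
    by_cases hi : a i ∈ X'
    · rw [hfix _ ⟨ha i, hi⟩] at hmem
      by_contra hij
      exact hdisj i j hij _ (p i).start_mem_support hmem
    · exact absurd hmem (hg_new i j hi)
  have hg_inj : ∀ i j, g (a i) = g (a j) → i = j := fun i j hij => by
    by_contra hne
    refine hdisj i j hne _ (p i).start_mem_support ?_
    rw [hinj (ha i) (ha j) hij]
    exact (p j).start_mem_support
  have hextend : ∀ i, ∃ q : H.Walk (g (a i)) (b i),
      q.IsPath ∧ ∀ v ∈ q.support, v = g (a i) ∨ v ∈ (p i).support := fun i => by
    by_cases hi : a i ∈ X'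
    · rw [hfix _ ⟨ha i, hi⟩]
      exact ⟨p i, hp i, fun v hv => Or.inr hv⟩
    · refine ⟨.cons (hadj _ ⟨ha i, hi⟩ _ (hmaps ⟨ha i, hi⟩)) (p i),
        (hp i).cons (hg_new i i hi), ?_⟩
      simp
  choose q hq hq_support using hextend
  refine ⟨fun i => g (a i), b, q, hq, hg_mem, hb, ?_, ?_⟩
  · intro i j hij v hvi hvj
    rcases hq_support i v hvi with rfl | hvi <;> rcases hq_support j _ hvj with hvj | hvj
    · exact hij (hg_inj i j hvj)
    · exact hij (hg_mem_support i j hvj)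
    · exact hij (hg_mem_support j i (hvj ▸ hvi)).symm
    · exact hdisj i j hij v hvi hvj
  · intro i v hv
    rcases hq_support i v hv with rfl | hv
    · exact Or.inl (hg_mem i)
    · exact Or.inr (hpU i v hv)

end SimpleGraph

namespace LenientTD

variable {V : Type} {G : SimpleGraph V} (D : LenientTD G)

theorem disjoint_biUnion_support_sdiff {s s' y : D.ι} (hadj : D.T.Adj s s')
    {w : D.T.Walk s' y} (hw : (Walk.cons hadj w).IsPath) :
    Disjoint (⋃ u ∈ w.support, D.χ u) (D.χ s \ D.χ s') := by
  classical
  rw [Set.disjoint_left]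
  intro x hx hxs
  obtain ⟨u, hu, hxu⟩ := Set.mem_iUnion₂.1 hx
  rw [Walk.cons_isPath_iff] at hw
  have hpath : (Walk.cons hadj (w.takeUntil u hu)).IsPath :=
    (hw.1.takeUntil hu).cons fun hs => hw.2 (w.support_takeUntil_subset_support hu hs)
  exact hxs.2 <| D.tree.isAcyclic.support_subset_of_preconnected (S := {r | x ∈ D.χ r})
    (D.trace_conn x).preconnected hxs.1 hxu hpath s'
    (List.mem_cons_of_mem _ (Walk.start_mem_support _))

theorem hasDisjointPathsIn_of_isPath {k : ℕ} (hfin : ∀ t, (D.χ t).Finite)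
    (hsize : ∀ t, (D.χ t).ncard = k) {x y : D.ι} (w : D.T.Walk x y) (hw : w.IsPath) :
    D.completion.HasDisjointPathsIn (Fin k) (D.χ x) (D.χ y) (⋃ u ∈ w.support, D.χ u) := by
  induction w with
  | @nil u =>
    have : Finite (D.χ u) := (hfin u).to_subtype
    simpa using hasDisjointPathsIn_of_embedding
      (Finite.equivFinOfCardEq (Nat.card_coe_set_eq _ ▸ hsize u)).symm.toEmbedding
  | @cons s s' y hadj w ih =>
    have hclique : ∀ v ∈ D.χ s' \ D.χ s, ∀ v' ∈ D.χ s \ D.χ s', D.completion.Adj v' v :=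
      fun v hv v' hv' => ⟨fun h => hv'.2 (h ▸ hv.1), s, s', Or.inr hadj, Or.inl hv'.1, Or.inr hv.1⟩
    simpa using (ih (Walk.cons_isPath_iff _ _ |>.1 hw).1).shift_start (hfin s') (hfin s)
      (by rw [hsize, hsize]) hclique (D.disjoint_biUnion_support_sdiff hadj hw)

end LenientTD

theorem extreme_completion_disjoint_paths_general {V : Type}
    (G : SimpleGraph V) (k : ℕ) (D : LenientTD G)
    (hsize : ∀ t, (D.χ t).ncard = k)
    (t t' : D.ι) :
    ∃ (a b : Fin k → V) (p : ∀ i, (D.completion).Walk (a i) (b i)),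
      (∀ i, (p i).IsPath) ∧ (∀ i, a i ∈ D.χ t) ∧ (∀ i, b i ∈ D.χ t') ∧
      ∀ i j, i ≠ j → ∀ v, v ∈ (p i).support → v ∉ (p j).support := by
  rcases k.eq_zero_or_pos with rfl | hk
  · exact ⟨Fin.elim0, Fin.elim0, fun i => i.elim0, fun i => i.elim0, fun i => i.elim0,
      fun i => i.elim0, fun i => i.elim0⟩
  have hfin : ∀ t, (D.χ t).Finite := fun t => Set.finite_of_ncard_pos (hsize t ▸ hk)
  obtain ⟨w⟩ := D.tree.connected.preconnected t t'
  classical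
  obtain ⟨a, b, p, hp, ha, hb, hdisj, -⟩ :=
    D.hasDisjointPathsIn_of_isPath hfin hsize w.bypass w.bypass_isPath
  exact ⟨a, b, p, hp, ha, hb, hdisj⟩

/-- in the completion of an extreme lenient tree decomposition of
width `k`, any two bags are joined by `k` pairwise vertex-disjoint paths. -/
theorem extreme_completion_disjoint_paths {V : Type} [Fintype V]
    (G : SimpleGraph V) (k : ℕ) (D : LenientTD G)
    (hsize : ∀ t, (D.χ t).ncard = k)
    (hinc : ∀ t t', t ≠ t' → ¬ D.χ t ⊆ D.χ t') (t t' : D.ι) :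
    ∃ (a b : Fin k → V) (p : ∀ i, (D.completion).Walk (a i) (b i)),
      (∀ i, (p i).IsPath) ∧ (∀ i, a i ∈ D.χ t) ∧ (∀ i, b i ∈ D.χ t') ∧
      ∀ i j, i ≠ j → ∀ v, v ∈ (p i).support → v ∉ (p j).support :=
  extreme_completion_disjoint_paths_general G k D hsize t t'
end
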